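/- Suppose φ = φ₁ + iφ₂ is a solution of -φ'' + φ - 2|φ|²φ = iαφ + h on [-T,T] with α, h real and h > 0. Then α‖φ‖² = h∫_{-T}^{T} φ₂(x)dx, and consequently |α| ≤ h√(2T)/‖φ‖ whenever φ ≠ 0. -/

import Mathlib

/-!
Pairing the equation with `φ` gives `φ'' φ̄ = (1 - 2|φ|²)|φ|² - iα|φ|² - h φ̄`, so
`Im (φ'' φ̄) = h φ₂ - α|φ|²`. Since `Im (φ'' φ̄)` is the derivative of the periodic function
`Im (φ' φ̄)`, its integral over a period vanishes, which is the identity `α‖φ‖² = h ∫ φ₂`.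
Cauchy–Schwarz gives `(∫ φ₂)² ≤ 2T ∫ φ₂² ≤ 2T ‖φ‖²`, and `‖φ‖ > 0` for a nonzero continuous
periodic `φ`, whence the bound on `|α|`.
-/

open Complex ComplexConjugate intervalIntegral
open MeasureTheory (volume)

theorem Complex.im_mul_conj_eq_of_eq {z w : ℂ} {α h : ℝ}
    (hw : -w + z - 2 * (‖z‖ : ℂ) ^ 2 * z = I * α * z + h) :
    (w * conj z).im = h * z.im - α * ‖z‖ ^ 2 := by
  have hw' : w = z - 2 * (‖z‖ : ℂ) ^ 2 * z - I * α * z - h := by linear_combination -hw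
  subst hw'
  simp only [mul_im, sub_re, sub_im, mul_re, conj_re, conj_im, I_re, I_im, ofReal_re, ofReal_im,
    ← ofReal_pow, Complex.sq_norm, normSq_apply, re_ofNat, im_ofNat]
  ring

theorem Complex.sq_im_le_sq_norm (z : ℂ) : z.im ^ 2 ≤ ‖z‖ ^ 2 := by
  rw [sq_le_sq, abs_norm]
  exact abs_im_le_norm z

theorem HasDerivAt.im_mul_conj {f f' : ℝ → ℂ} {f'' : ℂ} {x : ℝ}
    (hf : HasDerivAt f (f' x) x) (hf' : HasDerivAt f' f'' x) :
    HasDerivAt (fun y => (f' y * conj (f y)).im) (f'' * conj (f x)).im x := by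
  refine (imCLM.hasFDerivAt.comp_hasDerivAt x (hf'.mul hf.star)).congr_deriv ?_
  simp [mul_conj]

theorem Function.Periodic.deriv {f : ℝ → ℂ} {c : ℝ} (hper : Function.Periodic f c) :
    Function.Periodic (deriv f) c := fun x => by
  rw [← deriv_comp_add_const, show (fun y => f (y + c)) = f from funext hper]

theorem integral_im_deriv_deriv_mul_conj_eq_zero_of_periodic {f : ℝ → ℂ} {c : ℝ}
    (hf : ContDiff ℝ 2 f) (hper : Function.Periodic f c) (a : ℝ) :
    ∫ x in a..a + c, (deriv (deriv f) x * conj (f x)).im = 0 := by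
  have hf' : ContDiff ℝ 1 (deriv f) := hf.iterate_deriv' 1 1
  have hderiv : ∀ x, HasDerivAt (fun y => (deriv f y * conj (f y)).im)
      (deriv (deriv f) x * conj (f x)).im x := fun x =>
    ((hf.differentiable two_ne_zero x).hasDerivAt).im_mul_conj
      ((hf'.differentiable one_ne_zero x).hasDerivAt)
  have hcont : Continuous fun x => (deriv (deriv f) x * conj (f x)).im :=
    continuous_im.comp ((hf'.continuous_deriv le_rfl).mul
      (continuous_conj.comp (hf.continuous)))
  rw [integral_eq_sub_of_hasDerivAt (fun x _ => hderiv x) (hcont.intervalIntegrable _ _),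
    hper a, hper.deriv a, sub_self]

theorem intervalIntegral.sq_integral_le_mul_integral_sq {g : ℝ → ℝ} {a b : ℝ} (hab : a ≤ b)
    (hg : IntervalIntegrable g volume a b)
    (hg2 : IntervalIntegrable (fun x => g x ^ 2) volume a b) :
    (∫ x in a..b, g x) ^ 2 ≤ (b - a) * ∫ x in a..b, g x ^ 2 := by
  have hquad : ∀ t : ℝ,
      0 ≤ (b - a) * (t * t) + (-2 * ∫ x in a..b, g x) * t + ∫ x in a..b, g x ^ 2 := fun t => by
    have hexpand : ∫ x in a..b, (g x - t) ^ 2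
        = (b - a) * (t * t) + (-2 * ∫ x in a..b, g x) * t + ∫ x in a..b, g x ^ 2 := by
      simp_rw [show ∀ x, (g x - t) ^ 2 = g x ^ 2 - 2 * t * g x + t ^ 2 from fun x => by ring]
      rw [integral_add (hg2.sub (hg.const_mul _)) intervalIntegrable_const,
        integral_sub hg2 (hg.const_mul _), integral_const_mul, integral_const, smul_eq_mul]
      ring
    exact hexpand ▸ integral_nonneg hab fun _ _ => sq_nonneg _
  have hdiscrim := discrim_le_zero hquad
  rw [discrim] at hdiscrim
  linarith

theorem sq_integral_im_le_mul_integral_norm_sq {f : ℝ → ℂ} (hf : Continuous f) {a b : ℝ}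
    (hab : a ≤ b) : (∫ x in a..b, (f x).im) ^ 2 ≤ (b - a) * ∫ x in a..b, ‖f x‖ ^ 2 := by
  have hint : ∀ g : ℝ → ℝ, Continuous g → IntervalIntegrable g volume a b :=
    fun g hg => hg.intervalIntegrable a b
  calc (∫ x in a..b, (f x).im) ^ 2 ≤ (b - a) * ∫ x in a..b, (f x).im ^ 2 :=
        sq_integral_le_mul_integral_sq hab (hint _ (by fun_prop)) (hint _ (by fun_prop))
    _ ≤ (b - a) * ∫ x in a..b, ‖f x‖ ^ 2 := by
        gcongr
        exact integral_mono hab (hint _ (by fun_prop)) (hint _ (by fun_prop))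
          fun x => sq_im_le_sq_norm (f x)

theorem Function.Periodic.integral_norm_sq_pos {E : Type*} [NormedAddCommGroup E] {f : ℝ → E}
    {c : ℝ} (hper : Function.Periodic f c) (hc : 0 < c) (hf : Continuous f) (hne : f ≠ 0)
    (a : ℝ) : 0 < ∫ x in a..a + c, ‖f x‖ ^ 2 := by
  obtain ⟨x, hx⟩ := Function.ne_iff.1 hne
  obtain ⟨y, hy, hxy⟩ := hper.exists_mem_Ico hc x a
  refine integral_pos (by linarith) (by fun_prop) (fun _ _ => by positivity)
    ⟨y, Set.Ico_subset_Icc_self hy, ?_⟩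
  exact pow_pos (norm_pos_iff.2 (hxy ▸ hx)) 2

theorem abs_le_mul_sqrt_div_sqrt_of_mul_eq {α h J I L : ℝ} (hh : 0 ≤ h) (hI : 0 < I)
    (heq : α * I = h * J) (hJ : J ^ 2 ≤ L * I) : |α| ≤ h * √L / √I := by
  have hsq : α ^ 2 * I ≤ h ^ 2 * L := by
    refine le_of_mul_le_mul_right ?_ hI
    calc α ^ 2 * I * I = h ^ 2 * J ^ 2 := by linear_combination (α * I + h * J) * heq
      _ ≤ h ^ 2 * L * I := by nlinarith [sq_nonneg h]
  rw [le_div_iff₀ (Real.sqrt_pos.2 hI)]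
  calc |α| * √I = √(α ^ 2 * I) := by rw [Real.sqrt_mul (sq_nonneg _), Real.sqrt_sq_eq_abs]
    _ ≤ √(h ^ 2 * L) := Real.sqrt_le_sqrt hsq
    _ = h * √L := by rw [Real.sqrt_mul (sq_nonneg _), Real.sqrt_sq hh]

theorem alpha_small (T α h : ℝ) (hT : 0 < T) (hh : 0 < h) (φ : ℝ → ℂ)
    (hC2 : ContDiff ℝ 2 φ) (hper : ∀ x, φ (x + 2*T) = φ x)
    (heq : ∀ x, -deriv (deriv φ) x + φ x - 2 * ((‖φ x‖ : ℂ))^2 * φ x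
      = Complex.I * (α : ℂ) * φ x + (h : ℂ)) :
    α * (∫ x in (-T)..T, (‖φ x‖)^2) = h * ∫ x in (-T)..T, (φ x).im ∧
    (φ ≠ 0 → |α| ≤ h * Real.sqrt (2*T) / Real.sqrt (∫ x in (-T)..T, (‖φ x‖)^2)) := by
  have hend : -T + 2 * T = T := by ring
  have hcont : Continuous φ := hC2.continuous
  have hint_norm_sq : IntervalIntegrable (fun x => ‖φ x‖ ^ 2) volume (-T) T :=
    (by fun_prop : Continuous _).intervalIntegrable _ _
  have hint_im : IntervalIntegrable (fun x => (φ x).im) volume (-T) T :=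
    (by fun_prop : Continuous _).intervalIntegrable _ _
  have hbalance : α * (∫ x in (-T)..T, ‖φ x‖ ^ 2) = h * ∫ x in (-T)..T, (φ x).im := by
    have hzero := integral_im_deriv_deriv_mul_conj_eq_zero_of_periodic hC2 hper (-T)
    have hpointwise := fun x => im_mul_conj_eq_of_eq (heq x)
    simp_rw [hend, hpointwise] at hzero
    rw [integral_sub (hint_im.const_mul h) (hint_norm_sq.const_mul α), integral_const_mul,
      integral_const_mul] at hzero
    linarith
  refine ⟨hbalance, fun hne => ?_⟩
  have hpos : 0 < ∫ x in (-T)..T, ‖φ x‖ ^ 2 := by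
    simpa only [hend] using Function.Periodic.integral_norm_sq_pos hper (by linarith) hcont hne (-T)
  have hcauchy_schwarz : (∫ x in (-T)..T, (φ x).im) ^ 2 ≤ 2 * T * ∫ x in (-T)..T, ‖φ x‖ ^ 2 := by
    simpa only [sub_neg_eq_add, ← two_mul] using
      sq_integral_im_le_mul_integral_norm_sq hcont (a := -T) (b := T) (by linarith)
  exact abs_le_mul_sqrt_div_sqrt_of_mul_eq hh.le hpos hbalance hcauchy_schwarz
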